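/- Let G be a discrete group, N ⊴ G, and A a G-graded *-algebra. Define Θ on generators by Θ(a_r, s, tN) = (a_r, tN, s), mapping the crossed-product bimodule Y_{G/G}^G(A)⋊(G/N) (generators (a_r, s, tN)) to the Mansfield bimodule Y_{G/G}^G(A⋊(G/N)) for the decomposition grading on A⋊(G/N) (generators (x, s) with x a generator (a_r, tN) of A⋊(G/N) of degree r). Then Θ preserves the left module action of A⋊G⋊G⋊(G/N) (transported through the isomorphism (a_r, s, t, uN) ↦ (a_r, s t u N, s, t) of Proposition 3.2) and the right A⋊(G/N)-valued inner product, on all generators. -/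
import Mathlib


/-!
Statement 12 (Proposition 3.3 of Kaliszewski–Quigg): for a discrete group `G`,
`N ⊴ G`, and a `G`-graded *-algebra `A`, the map `Θ` defined on generators by
`Θ(a_r, s, tN) = (a_r, tN, s)`, from the crossed-product Mansfield bimodule
`Y_{G/G}^G(A) ⋊ (G/N)` (generators `(a_r, s, tN)`, modelled in
`(G × G × G ⧸ N) →₀ A`) to the Mansfield bimodule `Y_{G/G}^G(A ⋊ (G/N))` for
the decomposition grading on `A ⋊ (G/N)` (generators `((a_r, tN), s)`, modelled
in `(G × (G ⧸ N) × G) →₀ A`), preserves the left module action of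
`A ⋊ G ⋊ G ⋊ (G/N)` — transported through the isomorphism
`(a_r, s, t, uN) ↦ (a_r, s t uN, s, t)` of Proposition 3.2 — and the right
`A ⋊ (G/N)`-valued inner product, on all generators.
-/

attribute [local instance] Classical.propDecidable

noncomputable section

variable {G : Type*} [Group G] {A : Type*} [Ring A] [Algebra ℂ A] [StarRing A]
  [StarModule ℂ A] {N : Subgroup G} [N.Normal]

/-- `A` is a `G`-graded *-algebra with grading subspaces `𝒜 s`. -/
structure IsStarGrading (𝒜 : G → Submodule ℂ A) : Prop where
  one_mem : (1 : A) ∈ 𝒜 1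
  mul_mem : ∀ ⦃s t : G⦄ ⦃a b : A⦄, a ∈ 𝒜 s → b ∈ 𝒜 t → a * b ∈ 𝒜 (s * t)
  star_mem : ∀ ⦃s : G⦄ ⦃a : A⦄, a ∈ 𝒜 s → star a ∈ 𝒜 s⁻¹
  indep : iSupIndep 𝒜
  span_top : ⨆ s, 𝒜 s = ⊤

/-- Left action of the generator `(a, r, s, t, uN)` of `A ⋊ G ⋊ G ⋊ (G/N)` on the
generator `(b, r', s', vN)` of `Y_{G/G}^G(A) ⋊ (G/N)`:
`= (a b, r r', s' t⁻¹, vN)` if `s t = r' s'` and `uN = s'⁻¹ vN`, else `0`. -/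
def c4ActW (a : A) (r s t : G) (u : G ⧸ N) (b : A) (r' s' : G) (v : G ⧸ N) :
    (G × G × G ⧸ N) →₀ A :=
  if s * t = r' * s' ∧ u = ((s'⁻¹ : G) : G ⧸ N) * v then
    Finsupp.single (r * r', s' * t⁻¹, v) (a * b)
  else 0

/-- The `A ⋊ (G/N)`-valued right inner product on `Y_{G/G}^G(A) ⋊ (G/N)`, on
generators: `⟨(b,r,s,vN),(b',r',s',v'N)⟩ = (star b · b', v'N)` if `r s = r' s'`
and `s⁻¹ vN = s'⁻¹ v'N`, else `0`. -/
def wInner (b : A) (r s : G) (v : G ⧸ N) (b' : A) (r' s' : G) (v' : G ⧸ N) :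
    (G × G ⧸ N) →₀ A :=
  if r * s = r' * s' ∧ ((s⁻¹ : G) : G ⧸ N) * v = ((s'⁻¹ : G) : G ⧸ N) * v' then
    Finsupp.single (r⁻¹ * r', v') (star b * b')
  else 0

/-- Left action of the generator `(a, r, sN, t, w)` of
`(A ⋊ (G/N)) ⋊ G ⋊ G` on the generator `((b, r', s'N), v)` of the Mansfield
bimodule `Y_{G/G}^G(A ⋊ (G/N))`: `= ((a b, s'N), r r', v w⁻¹)` if `t w = r' v`
and `sN = r'·s'N`, else `0`. -/
def d4ActY (a : A) (r : G) (s : G ⧸ N) (t w : G) (b : A) (r' : G) (s' : G ⧸ N)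
    (v : G) : (G × (G ⧸ N) × G) →₀ A :=
  if t * w = r' * v ∧ s = (r' : G ⧸ N) * s' then
    Finsupp.single (r * r', s', v * w⁻¹) (a * b)
  else 0

/-- The `A ⋊ (G/N)`-valued right inner product on `Y_{G/G}^G(A ⋊ (G/N))`, on
generators: `⟨((b,r,sN),v),((b',r',s'N),v')⟩ = (star b · b', s'N)` if
`r v = r' v'` and `r·sN = r'·s'N`, else `0`. -/
def yDecInner (b : A) (r : G) (s : G ⧸ N) (v : G) (b' : A) (r' : G)
    (s' : G ⧸ N) (v' : G) : (G × G ⧸ N) →₀ A :=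
  if r * v = r' * v' ∧ (r : G ⧸ N) * s = (r' : G ⧸ N) * s' then
    Finsupp.single (r⁻¹ * r', s') (star b * b')
  else 0

/-- `Θ(a_r, s, tN) = (a_r, tN, s)`, extended linearly. -/
def ThetaDec (f : (G × G × G ⧸ N) →₀ A) : (G × (G ⧸ N) × G) →₀ A :=
  f.sum fun p x => Finsupp.single (p.1, p.2.2, p.2.1) x

/-- The index permutation underlying `ThetaDec`. -/
def thetaEquiv (G : Type*) (Q : Type*) : (G × G × Q) ≃ (G × Q × G) where
  toFun p := (p.1, p.2.2, p.2.1)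
  invFun p := (p.1, p.2.2, p.2.1)
  left_inv p := rfl
  right_inv p := rfl

lemma thetaDec_eq_mapDomain (f : (G × G × G ⧸ N) →₀ A) :
    ThetaDec f = Finsupp.mapDomain (thetaEquiv G (G ⧸ N)) f := rfl

lemma thetaDec_single (p : G × G × G ⧸ N) (a : A) :
    ThetaDec (Finsupp.single p a) = Finsupp.single (p.1, p.2.2, p.2.1) a := by
  rw [thetaDec_eq_mapDomain, Finsupp.mapDomain_single]; rfl

lemma thetaDec_zero : ThetaDec (0 : (G × G × G ⧸ N) →₀ A) = 0 := by
  rw [thetaDec_eq_mapDomain, Finsupp.mapDomain_zero]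
theorem theta_crossedProductMansfield_iso
    (𝒜 : G → Submodule ℂ A) (h𝒜 : IsStarGrading 𝒜) :
    -- `Θ` is the stated map on generators, and is a linear bijection
    (∀ (r s : G) (t : G ⧸ N) (a : A), a ∈ 𝒜 r →
      ThetaDec (Finsupp.single (r, s, t) a) = Finsupp.single (r, t, s) a) ∧
    Function.Bijective (ThetaDec (G := G) (A := A) (N := N)) ∧
    (∀ f g : (G × G × G ⧸ N) →₀ A, ThetaDec (f + g) = ThetaDec f + ThetaDec g) ∧
    (∀ (c : ℂ) (f : (G × G × G ⧸ N) →₀ A), ThetaDec (c • f) = c • ThetaDec f) ∧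
    -- `Θ` intertwines the left actions, transported through the isomorphism
    -- `(a_r, s, t, uN) ↦ (a_r, s t uN, s, t)` of Proposition 3.2
    (∀ (a : A) (r s t : G) (u : G ⧸ N) (b : A) (r' s' : G) (v : G ⧸ N),
      a ∈ 𝒜 r → b ∈ 𝒜 r' →
      ThetaDec (c4ActW a r s t u b r' s' v) =
        d4ActY a r (((s * t : G) : G ⧸ N) * u) s t b r' v s') ∧
    -- `Θ` preserves the right `A ⋊ (G/N)`-valued inner products
    (∀ (b₁ : A) (r₁ s₁ : G) (v₁ : G ⧸ N) (b₂ : A) (r₂ s₂ : G) (v₂ : G ⧸ N),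
      b₁ ∈ 𝒜 r₁ → b₂ ∈ 𝒜 r₂ →
      wInner b₁ r₁ s₁ v₁ b₂ r₂ s₂ v₂ =
        yDecInner b₁ r₁ v₁ s₁ b₂ r₂ v₂ s₂) := by
  refine ⟨?_, ?_, ?_, ?_, ?_, ?_⟩
  · intro r s t a _
    exact thetaDec_single (r, s, t) a
  · have : ThetaDec (G := G) (A := A) (N := N) =
        ⇑(Finsupp.equivCongrLeft (thetaEquiv G (G ⧸ N))) := by
      funext f
      rw [thetaDec_eq_mapDomain]
      exact (Finsupp.equivMapDomain_eq_mapDomain _ f).symm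
    rw [this]
    exact (Finsupp.equivCongrLeft (thetaEquiv G (G ⧸ N))).bijective
  · intro f g
    simp only [thetaDec_eq_mapDomain, Finsupp.mapDomain_add]
  · intro c f
    simp only [thetaDec_eq_mapDomain, Finsupp.mapDomain_smul]
  · intro a r s t u b r' s' v _ _
    unfold c4ActW d4ActY
    by_cases h1 : s * t = r' * s'
    · have hiff : (u = ((s'⁻¹ : G) : G ⧸ N) * v) ↔
          ((s * t : G) : G ⧸ N) * u = (r' : G ⧸ N) * v := by
        rw [h1, QuotientGroup.mk_mul, mul_assoc, mul_right_inj,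
          QuotientGroup.mk_inv, eq_inv_mul_iff_mul_eq]
      by_cases h2 : u = ((s'⁻¹ : G) : G ⧸ N) * v
      · rw [if_pos ⟨h1, h2⟩, if_pos ⟨h1, hiff.mp h2⟩, thetaDec_single]
      · rw [if_neg (fun hc => h2 hc.2), if_neg (fun hc => h2 (hiff.mpr hc.2)),
          thetaDec_zero]
    · rw [if_neg (fun hc => h1 hc.1), if_neg (fun hc => h1 hc.1), thetaDec_zero]
  · intro b₁ r₁ s₁ v₁ b₂ r₂ s₂ v₂ _ _
    unfold wInner yDecInner
    by_cases h1 : r₁ * s₁ = r₂ * s₂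
    · have hq : (r₁ : G ⧸ N) * (s₁ : G ⧸ N) = (r₂ : G ⧸ N) * (s₂ : G ⧸ N) := by
        rw [← QuotientGroup.mk_mul, ← QuotientGroup.mk_mul, h1]
      have hiff : (((s₁⁻¹ : G) : G ⧸ N) * v₁ = ((s₂⁻¹ : G) : G ⧸ N) * v₂) ↔
          ((r₁ : G ⧸ N) * v₁ = (r₂ : G ⧸ N) * v₂) := by
        constructor
        · intro h
          calc (r₁ : G ⧸ N) * v₁
              = ((r₁ : G ⧸ N) * (s₁ : G ⧸ N)) * (((s₁⁻¹ : G) : G ⧸ N) * v₁) := by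
                rw [QuotientGroup.mk_inv]; group
            _ = ((r₂ : G ⧸ N) * (s₂ : G ⧸ N)) * (((s₂⁻¹ : G) : G ⧸ N) * v₂) := by
                rw [hq, h]
            _ = (r₂ : G ⧸ N) * v₂ := by rw [QuotientGroup.mk_inv]; group
        · intro h
          calc ((s₁⁻¹ : G) : G ⧸ N) * v₁
              = ((r₁ : G ⧸ N) * (s₁ : G ⧸ N))⁻¹ * ((r₁ : G ⧸ N) * v₁) := by
                rw [QuotientGroup.mk_inv]; group
            _ = ((r₂ : G ⧸ N) * (s₂ : G ⧸ N))⁻¹ * ((r₂ : G ⧸ N) * v₂) := by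
                rw [hq, h]
            _ = ((s₂⁻¹ : G) : G ⧸ N) * v₂ := by rw [QuotientGroup.mk_inv]; group
      by_cases h2 : ((s₁⁻¹ : G) : G ⧸ N) * v₁ = ((s₂⁻¹ : G) : G ⧸ N) * v₂
      · rw [if_pos ⟨h1, h2⟩, if_pos ⟨h1, hiff.mp h2⟩]
      · rw [if_neg (fun hc => h2 hc.2), if_neg (fun hc => h2 (hiff.mpr hc.2))]
    · rw [if_neg (fun hc => h1 hc.1), if_neg (fun hc => h1 hc.1)]

end
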